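/- (Conjugate Descent global convergence) Assume Assumptions A1 and A2 hold for x⁰, and let 0 ≤ η < 1−σ. Consider the conjugate gradient iteration with β_k := η·β_k^{CD}, where β_k^{CD} := ψ_{x^k}(v(x^k)) / ψ_{x^{k−1}}(d^{k−1}) for k ≥ 1. If each t_k satisfies the strong Wolfe conditions at x^k along d^k, then liminf_{k→∞} ‖v(x^k)‖ = 0. -/

import Mathlib

open scoped BigOperators

noncomputable def pd (n : ℕ) (F : EuclideanSpace ℝ (Fin n) → ℝ)
    (x : EuclideanSpace ℝ (Fin n)) (j : Fin n) : ℝ :=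
  fderiv ℝ F x (EuclideanSpace.single j (1 : ℝ))

noncomputable def glo (n : ℕ) (F H : EuclideanSpace ℝ (Fin n) → ℝ)
    (x : EuclideanSpace ℝ (Fin n)) (j : Fin n) : ℝ :=
  min (pd n F x j) (pd n H x j)

noncomputable def ghi (n : ℕ) (F H : EuclideanSpace ℝ (Fin n) → ℝ)
    (x : EuclideanSpace ℝ (Fin n)) (j : Fin n) : ℝ :=
  max (pd n F x j) (pd n H x j)

noncomputable def gloVec (n : ℕ) (F H : EuclideanSpace ℝ (Fin n) → ℝ)
    (x : EuclideanSpace ℝ (Fin n)) : EuclideanSpace ℝ (Fin n) :=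
  WithLp.toLp 2 (fun j => glo n F H x j)

noncomputable def ghiVec (n : ℕ) (F H : EuclideanSpace ℝ (Fin n) → ℝ)
    (x : EuclideanSpace ℝ (Fin n)) : EuclideanSpace ℝ (Fin n) :=
  WithLp.toLp 2 (fun j => ghi n F H x j)

noncomputable def psi (m n : ℕ) (Gl Gu : Fin m → EuclideanSpace ℝ (Fin n) → ℝ)
    (x v : EuclideanSpace ℝ (Fin n)) : ℝ :=
  ⨆ i : Fin m, (1 / 2 : ℝ) *
    ((∑ j : Fin n, (glo n (Gl i) (Gu i) x j + ghi n (Gl i) (Gu i) x j) * v j) +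
     (∑ j : Fin n, (ghi n (Gl i) (Gu i) x j - glo n (Gl i) (Gu i) x j) * |v j|))

def LevelSet (m n : ℕ) (Gl Gu : Fin m → EuclideanSpace ℝ (Fin n) → ℝ)
    (x0 : EuclideanSpace ℝ (Fin n)) : Set (EuclideanSpace ℝ (Fin n)) :=
  {x | ∀ i : Fin m, Gl i x ≤ Gl i x0 ∧ Gu i x ≤ Gu i x0}

def StdWolfe (m n : ℕ) (Gl Gu : Fin m → EuclideanSpace ℝ (Fin n) → ℝ)
    (ρ σ : ℝ) (x d : EuclideanSpace ℝ (Fin n)) (t : ℝ) : Prop :=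
  (∀ i : Fin m,
      Gl i (x + t • d) ≤ Gl i x + ρ * t * psi m n Gl Gu x d ∧
      Gu i (x + t • d) ≤ Gu i x + ρ * t * psi m n Gl Gu x d) ∧
  σ * psi m n Gl Gu x d ≤ psi m n Gl Gu (x + t • d) d

def StrongWolfe (m n : ℕ) (Gl Gu : Fin m → EuclideanSpace ℝ (Fin n) → ℝ)
    (ρ σ : ℝ) (x d : EuclideanSpace ℝ (Fin n)) (t : ℝ) : Prop :=
  (∀ i : Fin m,
      Gl i (x + t • d) ≤ Gl i x + ρ * t * psi m n Gl Gu x d ∧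
      Gu i (x + t • d) ≤ Gu i x + ρ * t * psi m n Gl Gu x d) ∧
  |psi m n Gl Gu (x + t • d) d| ≤ σ * |psi m n Gl Gu x d|

def AssumptionA1 (m n : ℕ) (Gl Gu : Fin m → EuclideanSpace ℝ (Fin n) → ℝ)
    (x0 : EuclideanSpace ℝ (Fin n)) : Prop :=
  ∀ i : Fin m, ∃ L : ℝ, 0 < L ∧
    ∀ y ∈ LevelSet m n Gl Gu x0, ∀ z ∈ LevelSet m n Gl Gu x0,
      ‖gloVec n (Gl i) (Gu i) y - gloVec n (Gl i) (Gu i) z‖ ≤ L * ‖y - z‖ ∧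
      ‖ghiVec n (Gl i) (Gu i) y - ghiVec n (Gl i) (Gu i) z‖ ≤ L * ‖y - z‖

def AssumptionA2 (m n : ℕ) (Gl Gu : Fin m → EuclideanSpace ℝ (Fin n) → ℝ)
    (x0 : EuclideanSpace ℝ (Fin n)) : Prop :=
  ∀ y : ℕ → EuclideanSpace ℝ (Fin n),
    (∀ k, y k ∈ LevelSet m n Gl Gu x0) →
    (∀ (i : Fin m) (k : ℕ), Gl i (y (k+1)) ≤ Gl i (y k) ∧ Gu i (y (k+1)) ≤ Gu i (y k)) →
    ∀ i : Fin m, (∃ Cl : ℝ, ∀ k, Cl ≤ Gl i (y k)) ∧ (∃ Cu : ℝ, ∀ k, Cu ≤ Gu i (y k))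

/-!
`ψ_x` is the support function `v ↦ max_i max {gᵀv : g̲_i(x) ≤ g ≤ g̅_i(x)}` of a finite union of
boxes, hence sublinear in `v`, and under A1 it is Lipschitz in `x` on the level set. Sublinearity
and the curvature condition (W2') give, by induction, the sufficient descent
`ψ_k(d_k) ≤ (1 - ησ) ψ_k(v_k) ≤ -(1 - ησ) ‖v_k‖² / 2`. The Armijo condition (W1) and A2 then give
the Zoutendijk condition `∑ ψ_k(d_k)² / ‖d_k‖² < ∞`. If `‖v_k‖ ≥ ε` for all large `k`, then
in `‖d_{k+1}‖ ≤ ‖v_{k+1}‖ + β_{k+1} ‖d_k‖` the coefficient satisfies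
`β_{k+1} ≤ η / (1 - ησ) · ψ_{k+1}(v_{k+1}) / ψ_k(v_k)` with `η < 1 - ησ`, so `‖d_k‖ / |ψ_k(v_k)|`
stays bounded and the Zoutendijk terms stay away from `0`, a contradiction.
-/
open Filter Topology

lemma half_mul_add_sub_mul_abs_eq_max {a b : ℝ} (hab : a ≤ b) (v : ℝ) :
    (1 / 2 : ℝ) * ((a + b) * v + (b - a) * |v|) = max (a * v) (b * v) := by
  rcases le_or_gt 0 v with hv | hv
  · rw [abs_of_nonneg hv, max_eq_right (mul_le_mul_of_nonneg_right hab hv)]; ring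
  · rw [abs_of_neg hv, max_eq_left (mul_le_mul_of_nonpos_right hab hv.le)]; ring

lemma sum_abs_mul_abs_le_norm_mul_norm {ι : Type*} [Fintype ι] (p q : EuclideanSpace ℝ ι) :
    ∑ j, |p j| * |q j| ≤ ‖p‖ * ‖q‖ := by
  simpa only [EuclideanSpace.norm_eq, Real.norm_eq_abs] using
    Real.sum_mul_le_sqrt_mul_sqrt Finset.univ (fun j => |p j|) (fun j => |q j|)

lemma sum_range_le_sub_of_le_sub {f g : ℕ → ℝ} {C : ℝ} (h : ∀ k, f k ≤ g k - g (k+1))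
    (hC : ∀ k, C ≤ g k) (N : ℕ) : ∑ k ∈ Finset.range N, f k ≤ g 0 - C :=
  calc ∑ k ∈ Finset.range N, f k ≤ ∑ k ∈ Finset.range N, (g k - g (k+1)) :=
        Finset.sum_le_sum fun k _ => h k
    _ = g 0 - g N := Finset.sum_range_sub' g N
    _ ≤ g 0 - C := by linarith [hC N]

lemma exists_eventually_le_of_le_add_mul {u : ℕ → ℝ} {a r : ℝ} (hr0 : 0 ≤ r) (hr1 : r < 1)
    (h : ∀ᶠ k in atTop, u (k+1) ≤ a + r * u k) : ∃ B, ∀ᶠ k in atTop, u k ≤ B := by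
  obtain ⟨K, hK⟩ := eventually_atTop.1 h
  refine ⟨max (u K) (a / (1 - r)), eventually_atTop.2 ⟨K, fun k hk => ?_⟩⟩
  induction k, hk using Nat.le_induction with
  | base => exact le_max_left _ _
  | succ k hk ih =>
    have : a ≤ (1 - r) * max (u K) (a / (1 - r)) := by
      rw [← div_le_iff₀' (by linarith)]; exact le_max_right _ _
    nlinarith [hK k hk]

lemma liminf_eq_zero_of_frequently_lt {u : ℕ → ℝ} (hu : ∀ k, 0 ≤ u k)
    (h : ∀ ε > 0, ∃ᶠ k in atTop, u k < ε) : liminf u atTop = 0 := by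
  refine le_antisymm (le_of_forall_pos_le_add fun ε hε => ?_) ?_
  · rw [zero_add]
    exact liminf_le_of_frequently_le ((h ε hε).mono fun k hk => hk.le) (isBoundedUnder_of ⟨0, hu⟩)
  · exact le_liminf_of_le (IsCoboundedUnder.of_frequently_le ((h 1 one_pos).mono fun k hk => hk.le))
      (Eventually.of_forall hu)

noncomputable def boxSupport {ι : Type*} [Fintype ι] (a b v : EuclideanSpace ℝ ι) : ℝ :=
  ∑ j, max (a j * v j) (b j * v j)

section BoxSupport

variable {ι : Type*} [Fintype ι]

lemma boxSupport_zero (a b : EuclideanSpace ℝ ι) : boxSupport a b 0 = 0 := by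
  simp [boxSupport]

lemma boxSupport_smul (a b v : EuclideanSpace ℝ ι) {c : ℝ} (hc : 0 ≤ c) :
    boxSupport a b (c • v) = c * boxSupport a b v := by
  simp only [boxSupport, Finset.mul_sum, mul_max_of_nonneg _ _ hc, PiLp.smul_apply, smul_eq_mul,
    mul_left_comm c]

lemma boxSupport_add_le (a b u w : EuclideanSpace ℝ ι) :
    boxSupport a b (u + w) ≤ boxSupport a b u + boxSupport a b w := by
  simp only [boxSupport, ← Finset.sum_add_distrib, PiLp.add_apply, mul_add]
  exact Finset.sum_le_sum fun j _ => max_add_add_le_max_add_max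

lemma boxSupport_le_add (a b a' b' v : EuclideanSpace ℝ ι) :
    boxSupport a b v ≤ boxSupport a' b' v + (‖a - a'‖ + ‖b - b'‖) * ‖v‖ := by
  have hcoord : ∀ j, max (a j * v j) (b j * v j) ≤
      max (a' j * v j) (b' j * v j) + (|(a - a') j| * |v j| + |(b - b') j| * |v j|) := by
    intro j
    have h := (le_abs_self _).trans (abs_max_sub_max_le_max (a j * v j) (b j * v j)
      (a' j * v j) (b' j * v j))
    simp only [← sub_mul, abs_mul, PiLp.sub_apply] at h ⊢
    have := max_le_add_of_nonneg (mul_nonneg (abs_nonneg (a j - a' j)) (abs_nonneg (v j)))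
      (mul_nonneg (abs_nonneg (b j - b' j)) (abs_nonneg (v j)))
    linarith
  calc boxSupport a b v
      ≤ boxSupport a' b' v + (∑ j, |(a - a') j| * |v j| + ∑ j, |(b - b') j| * |v j|) := by
        simp only [boxSupport, ← Finset.sum_add_distrib]
        exact Finset.sum_le_sum fun j _ => hcoord j
    _ ≤ boxSupport a' b' v + (‖a - a'‖ + ‖b - b'‖) * ‖v‖ := by
        have := sum_abs_mul_abs_le_norm_mul_norm (a - a') v
        have := sum_abs_mul_abs_le_norm_mul_norm (b - b') v
        nlinarith

end BoxSupport

section Psi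

variable {m n : ℕ} {Gl Gu : Fin m → EuclideanSpace ℝ (Fin n) → ℝ}

lemma psi_eq_iSup_boxSupport (x v : EuclideanSpace ℝ (Fin n)) :
    psi m n Gl Gu x v =
      ⨆ i, boxSupport (gloVec n (Gl i) (Gu i) x) (ghiVec n (Gl i) (Gu i) x) v := by
  refine iSup_congr fun i => ?_
  rw [← Finset.sum_add_distrib, Finset.mul_sum]
  exact Finset.sum_congr rfl fun j _ => half_mul_add_sub_mul_abs_eq_max min_le_max (v j)

lemma boxSupport_le_psi (x v : EuclideanSpace ℝ (Fin n)) (i : Fin m) :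
    boxSupport (gloVec n (Gl i) (Gu i) x) (ghiVec n (Gl i) (Gu i) x) v ≤ psi m n Gl Gu x v := by
  rw [psi_eq_iSup_boxSupport]
  exact le_ciSup (f := fun i => boxSupport (gloVec n (Gl i) (Gu i) x) (ghiVec n (Gl i) (Gu i) x) v)
    (Finite.bddAbove_range _) i

lemma psi_zero (x : EuclideanSpace ℝ (Fin n)) : psi m n Gl Gu x 0 = 0 := by
  simp only [psi_eq_iSup_boxSupport, boxSupport_zero, Real.iSup_const_zero]

lemma nonempty_of_psi_ne_zero {x v : EuclideanSpace ℝ (Fin n)} (h : psi m n Gl Gu x v ≠ 0) :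
    Nonempty (Fin m) := by
  by_contra hm
  rw [not_nonempty_iff] at hm
  exact h (Real.iSup_of_isEmpty _)

lemma psi_smul (x v : EuclideanSpace ℝ (Fin n)) {c : ℝ} (hc : 0 ≤ c) :
    psi m n Gl Gu x (c • v) = c * psi m n Gl Gu x v := by
  simp only [psi_eq_iSup_boxSupport, boxSupport_smul _ _ _ hc, Real.mul_iSup_of_nonneg hc]

lemma psi_le_neg_half_sq_norm {y v : EuclideanSpace ℝ (Fin n)}
    (hv : ∀ w, psi m n Gl Gu y v + (1/2) * ‖v‖^2 ≤ psi m n Gl Gu y w + (1/2) * ‖w‖^2) :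
    psi m n Gl Gu y v ≤ -(1/2) * ‖v‖^2 := by
  have := hv 0
  rw [psi_zero, norm_zero] at this
  linarith

lemma psi_add_le [Nonempty (Fin m)] (x u w : EuclideanSpace ℝ (Fin n)) :
    psi m n Gl Gu x (u + w) ≤ psi m n Gl Gu x u + psi m n Gl Gu x w := by
  rw [psi_eq_iSup_boxSupport]
  exact ciSup_le fun i => (boxSupport_add_le _ _ u w).trans
    (add_le_add (boxSupport_le_psi x u i) (boxSupport_le_psi x w i))

lemma psi_le_add_mul_norm [Nonempty (Fin m)] {x y : EuclideanSpace ℝ (Fin n)} {C : ℝ}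
    (h : ∀ i, ‖gloVec n (Gl i) (Gu i) y - gloVec n (Gl i) (Gu i) x‖
      + ‖ghiVec n (Gl i) (Gu i) y - ghiVec n (Gl i) (Gu i) x‖ ≤ C)
    (v : EuclideanSpace ℝ (Fin n)) :
    psi m n Gl Gu y v ≤ psi m n Gl Gu x v + C * ‖v‖ := by
  rw [psi_eq_iSup_boxSupport]
  exact ciSup_le fun i => (boxSupport_le_add _ _ _ _ v).trans
    (add_le_add (boxSupport_le_psi x v i) (mul_le_mul_of_nonneg_right (h i) (norm_nonneg v)))

lemma AssumptionA1.exists_psi_le_add [Nonempty (Fin m)] {x0 : EuclideanSpace ℝ (Fin n)}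
    (hA1 : AssumptionA1 m n Gl Gu x0) :
    ∃ L, 0 ≤ L ∧ ∀ y ∈ LevelSet m n Gl Gu x0, ∀ z ∈ LevelSet m n Gl Gu x0,
      ∀ v, psi m n Gl Gu y v ≤ psi m n Gl Gu z v + L * ‖y - z‖ * ‖v‖ := by
  choose L hLpos hL using hA1
  refine ⟨2 * ∑ i, L i, mul_nonneg zero_le_two (Finset.sum_nonneg fun i _ => (hLpos i).le),
    fun y hy z hz v => ?_⟩
  refine psi_le_add_mul_norm (fun i => ?_) v
  have hLi : L i ≤ ∑ i, L i := Finset.single_le_sum (fun i _ => (hLpos i).le) (Finset.mem_univ i)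
  have := hL i y hy z hz
  nlinarith [norm_nonneg (y - z)]

lemma psi_add_cd_smul_le [Nonempty (Fin m)] {x x' v d : EuclideanSpace ℝ (Fin n)} {η σ : ℝ}
    (hη : 0 ≤ η) (hd : psi m n Gl Gu x d < 0) (hv : psi m n Gl Gu x' v < 0)
    (hcurv : |psi m n Gl Gu x' d| ≤ σ * |psi m n Gl Gu x d|) :
    psi m n Gl Gu x' (v + (η * (psi m n Gl Gu x' v / psi m n Gl Gu x d)) • d) ≤
      (1 - η * σ) * psi m n Gl Gu x' v := by
  set θ := psi m n Gl Gu x' v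
  set P := psi m n Gl Gu x d
  have hβ : 0 ≤ η * (θ / P) := mul_nonneg hη (div_nonneg_of_nonpos hv.le hd.le)
  have hcurv' : psi m n Gl Gu x' d ≤ σ * -P := by
    rw [← abs_of_neg hd]; exact (le_abs_self _).trans hcurv
  calc psi m n Gl Gu x' (v + (η * (θ / P)) • d)
      ≤ θ + η * (θ / P) * psi m n Gl Gu x' d := by
        rw [← psi_smul _ _ hβ]; exact psi_add_le _ _ _
    _ ≤ θ + η * (θ / P) * (σ * -P) := by gcongr
    _ = (1 - η * σ) * θ := by field_simp [hd.ne]; ring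

lemma StrongWolfe.sigma_nonneg {ρ σ t : ℝ} {x d : EuclideanSpace ℝ (Fin n)}
    (hw : StrongWolfe m n Gl Gu ρ σ x d t) (hd : psi m n Gl Gu x d ≠ 0) : 0 ≤ σ :=
  (mul_nonneg_iff_of_pos_right (abs_pos.2 hd)).1 ((abs_nonneg _).trans hw.2)

lemma StrongWolfe.le_of_psi_neg {ρ σ t : ℝ} {x d : EuclideanSpace ℝ (Fin n)}
    (hw : StrongWolfe m n Gl Gu ρ σ x d t) (hρ : 0 < ρ) (ht : 0 < t)
    (hd : psi m n Gl Gu x d < 0) (i : Fin m) :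
    Gl i (x + t • d) ≤ Gl i x ∧ Gu i (x + t • d) ≤ Gu i x := by
  have hdec : ρ * t * psi m n Gl Gu x d < 0 := mul_neg_of_pos_of_neg (mul_pos hρ ht) hd
  exact ⟨by linarith [(hw.1 i).1], by linarith [(hw.1 i).2]⟩

lemma StrongWolfe.sq_psi_div_sq_norm_le {ρ σ t L : ℝ} {x d : EuclideanSpace ℝ (Fin n)}
    (hw : StrongWolfe m n Gl Gu ρ σ x d t) (hσ : σ < 1) (ht : 0 < t)
    (hd : psi m n Gl Gu x d < 0)
    (hL : psi m n Gl Gu (x + t • d) d ≤ psi m n Gl Gu x d + L * ‖t • d‖ * ‖d‖) :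
    psi m n Gl Gu x d ^ 2 / ‖d‖ ^ 2 ≤ L / (1 - σ) * (t * -psi m n Gl Gu x d) := by
  have hd0 : 0 < ‖d‖ := norm_pos_iff.2 fun h => hd.ne (by rw [h, psi_zero])
  have hcurv : σ * psi m n Gl Gu x d ≤ psi m n Gl Gu (x + t • d) d := by
    have := (abs_le.1 hw.2).1
    rwa [abs_of_neg hd, mul_neg, neg_neg] at this
  rw [norm_smul, Real.norm_of_nonneg ht.le] at hL
  have hstep : (1 - σ) * -psi m n Gl Gu x d ≤ L * t * ‖d‖ ^ 2 := by nlinarith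
  rw [div_le_iff₀ (by positivity), div_mul_eq_mul_div, div_mul_eq_mul_div,
    le_div_iff₀ (by linarith)]
  nlinarith

end Psi

section Iteration

variable {m n : ℕ} {Gl Gu : Fin m → EuclideanSpace ℝ (Fin n) → ℝ}
  {x d v : ℕ → EuclideanSpace ℝ (Fin n)} {t β : ℕ → ℝ} {ρ σ η : ℝ}

lemma cd_sufficient_descent [Nonempty (Fin m)] (hσ : 0 ≤ σ) (hη : 0 ≤ η) (hησ : η * σ < 1)
    (hv : ∀ k, psi m n Gl Gu (x k) (v k) < 0) (hd0 : d 0 = v 0)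
    (hdk : ∀ k, d (k+1) = v (k+1) + β (k+1) • d k)
    (hβ : ∀ k, β (k+1) = η * (psi m n Gl Gu (x (k+1)) (v (k+1)) / psi m n Gl Gu (x k) (d k)))
    (hcurv : ∀ k, |psi m n Gl Gu (x (k+1)) (d k)| ≤ σ * |psi m n Gl Gu (x k) (d k)|) (k : ℕ) :
    psi m n Gl Gu (x k) (d k) ≤ (1 - η * σ) * psi m n Gl Gu (x k) (v k) := by
  induction k with
  | zero => rw [hd0]; nlinarith [hv 0, mul_nonneg hη hσ]
  | succ k ih =>
    have hdk' : psi m n Gl Gu (x k) (d k) < 0 :=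
      ih.trans_lt (mul_neg_of_pos_of_neg (by linarith) (hv k))
    rw [hdk, hβ]
    exact psi_add_cd_smul_le hη hdk' (hv (k+1)) (hcurv k)

lemma norm_cd_direction_succ_le (hη : 0 ≤ η) (hv : ∀ k, psi m n Gl Gu (x k) (v k) < 0)
    (hd : ∀ k, psi m n Gl Gu (x k) (d k) < 0) (hdk : ∀ k, d (k+1) = v (k+1) + β (k+1) • d k)
    (hβ : ∀ k, β (k+1) = η * (psi m n Gl Gu (x (k+1)) (v (k+1)) / psi m n Gl Gu (x k) (d k)))
    (k : ℕ) :
    ‖d (k+1)‖ ≤ ‖v (k+1)‖ +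
      η * (-psi m n Gl Gu (x (k+1)) (v (k+1)) / -psi m n Gl Gu (x k) (d k)) * ‖d k‖ := by
  have hβ0 : 0 ≤ β (k+1) := hβ k ▸ mul_nonneg hη (div_nonneg_of_nonpos (hv _).le (hd k).le)
  calc ‖d (k+1)‖ ≤ ‖v (k+1)‖ + ‖β (k+1) • d k‖ := hdk k ▸ norm_add_le _ _
    _ = _ := by rw [norm_smul, Real.norm_of_nonneg hβ0, hβ, neg_div_neg_eq]

lemma mem_levelSet_of_succ_le
    (h : ∀ i k, Gl i (x (k+1)) ≤ Gl i (x k) ∧ Gu i (x (k+1)) ≤ Gu i (x k)) (k : ℕ) :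
    x k ∈ LevelSet m n Gl Gu (x 0) := by
  induction k with
  | zero => exact fun i => ⟨le_rfl, le_rfl⟩
  | succ k ih => exact fun i => ⟨(h i k).1.trans (ih i).1, (h i k).2.trans (ih i).2⟩

lemma summable_sq_psi_div_sq_norm [Nonempty (Fin m)] (hρ : 0 < ρ) (hσ : σ < 1)
    (ht : ∀ k, 0 < t k) (hx : ∀ k, x (k+1) = x k + t k • d k)
    (hw : ∀ k, StrongWolfe m n Gl Gu ρ σ (x k) (d k) (t k))
    (hd : ∀ k, psi m n Gl Gu (x k) (d k) < 0)
    (hA1 : AssumptionA1 m n Gl Gu (x 0)) (hA2 : AssumptionA2 m n Gl Gu (x 0)) :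
    Summable fun k => psi m n Gl Gu (x k) (d k) ^ 2 / ‖d k‖ ^ 2 := by
  have hdec : ∀ i k, Gl i (x (k+1)) ≤ Gl i (x k) ∧ Gu i (x (k+1)) ≤ Gu i (x k) := fun i k =>
    hx k ▸ (hw k).le_of_psi_neg hρ (ht k) (hd k) i
  have hL0 := mem_levelSet_of_succ_le hdec
  obtain ⟨L, hL, hLip⟩ := hA1.exists_psi_le_add
  obtain ⟨i⟩ := ‹Nonempty (Fin m)›
  obtain ⟨C, hC⟩ := (hA2 x hL0 hdec i).1
  have hzout : ∀ k, psi m n Gl Gu (x k) (d k) ^ 2 / ‖d k‖ ^ 2 ≤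
      L / (1 - σ) * (t k * -psi m n Gl Gu (x k) (d k)) := fun k => by
    have := hLip _ (hL0 (k+1)) _ (hL0 k) (d k)
    rw [hx k, add_sub_cancel_left] at this
    exact (hw k).sq_psi_div_sq_norm_le hσ (ht k) (hd k) this
  have harmijo : ∀ k, t k * -psi m n Gl Gu (x k) (d k) ≤ Gl i (x k) / ρ - Gl i (x (k+1)) / ρ := by
    intro k
    rw [← sub_div, le_div_iff₀ hρ, hx k]
    linarith [((hw k).1 i).1]
  refine summable_of_sum_range_le (c := L / (1 - σ) * (Gl i (x 0) / ρ - C / ρ))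
    (fun k => by positivity) fun N => ?_
  calc ∑ k ∈ Finset.range N, psi m n Gl Gu (x k) (d k) ^ 2 / ‖d k‖ ^ 2
      ≤ ∑ k ∈ Finset.range N, L / (1 - σ) * (t k * -psi m n Gl Gu (x k) (d k)) :=
        Finset.sum_le_sum fun k _ => hzout k
    _ = L / (1 - σ) * ∑ k ∈ Finset.range N, t k * -psi m n Gl Gu (x k) (d k) :=
        (Finset.mul_sum _ _ _).symm
    _ ≤ L / (1 - σ) * (Gl i (x 0) / ρ - C / ρ) := by
        have : 0 ≤ L / (1 - σ) := div_nonneg hL (by linarith)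
        gcongr
        exact sum_range_le_sub_of_le_sub harmijo
          (fun k => div_le_div_of_nonneg_right (hC k) hρ.le) N

end Iteration

lemma frequently_lt_of_tendsto_sq_div_sq_zero {θ p D V : ℕ → ℝ} {c η ε : ℝ} (hc : 0 < c)
    (hη : 0 ≤ η) (hηc : η < c) (hV : ∀ k, 0 < V k) (hθ : ∀ k, V k ^ 2 / 2 ≤ θ k)
    (hp : ∀ k, c * θ k ≤ p k) (hD : ∀ k, 0 < D k)
    (hrec : ∀ k, D (k+1) ≤ V (k+1) + η * (θ (k+1) / p k) * D k)
    (hlim : Tendsto (fun k => p k ^ 2 / D k ^ 2) atTop (𝓝 0)) (hε : 0 < ε) :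
    ∃ᶠ k in atTop, V k < ε := by
  have hθ0 : ∀ k, 0 < θ k := fun k => by nlinarith [hV k, hθ k]
  have hp0 : ∀ k, 0 < p k := fun k => by nlinarith [hθ0 k, hp k]
  by_contra hfreq
  simp only [not_frequently, not_lt] at hfreq
  have hu : ∀ᶠ k in atTop, D (k+1) / θ (k+1) ≤ 2 / ε + η / c * (D k / θ k) := by
    filter_upwards [(tendsto_add_atTop_nat 1).eventually hfreq] with k hk
    have hVθ : V (k+1) / θ (k+1) ≤ 2 / ε := by
      rw [div_le_div_iff₀ (hθ0 _) hε]
      nlinarith [hθ (k+1), mul_le_mul_of_nonneg_left hk (hV (k+1)).le]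
    have hβ : η * (θ (k+1) / p k) * D k / θ (k+1) ≤ η / c * (D k / θ k) :=
      calc η * (θ (k+1) / p k) * D k / θ (k+1) = η * D k / p k := by
            field_simp [(hθ0 (k+1)).ne', (hp0 k).ne']
        _ ≤ η * D k / (c * θ k) :=
            div_le_div_of_nonneg_left (mul_nonneg hη (hD k).le) (mul_pos hc (hθ0 k)) (hp k)
        _ = η / c * (D k / θ k) := by rw [div_mul_div_comm]
    calc D (k+1) / θ (k+1) ≤ (V (k+1) + η * (θ (k+1) / p k) * D k) / θ (k+1) :=
          div_le_div_of_nonneg_right (hrec k) (hθ0 _).le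
      _ = V (k+1) / θ (k+1) + η * (θ (k+1) / p k) * D k / θ (k+1) := add_div _ _ _
      _ ≤ 2 / ε + η / c * (D k / θ k) := add_le_add hVθ hβ
  obtain ⟨B, hB⟩ := exists_eventually_le_of_le_add_mul (u := fun k => D k / θ k)
    (div_nonneg hη hc.le) ((div_lt_one hc).2 hηc) hu
  obtain ⟨k₀, hk₀⟩ := hB.exists
  have hB0 : 0 < B := (div_pos (hD k₀) (hθ0 k₀)).trans_le hk₀
  have hlow : ∀ᶠ k in atTop, (c / B) ^ 2 ≤ p k ^ 2 / D k ^ 2 := by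
    filter_upwards [hB] with k hk
    have : c / B ≤ p k / D k :=
      calc c / B ≤ c / (D k / θ k) :=
            div_le_div_of_nonneg_left hc.le (div_pos (hD k) (hθ0 k)) hk
        _ = c * θ k / D k := by rw [div_div_eq_mul_div]
        _ ≤ p k / D k := div_le_div_of_nonneg_right (hp k) (hD k).le
    rw [← div_pow]
    exact pow_le_pow_left₀ (div_pos hc hB0).le this 2
  exact absurd (ge_of_tendsto hlim hlow) (not_le.2 (by positivity))

theorem cd_convergence_general (m n : ℕ)
    (Gl Gu : Fin m → EuclideanSpace ℝ (Fin n) → ℝ)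
    (vv : EuclideanSpace ℝ (Fin n) → EuclideanSpace ℝ (Fin n))
    (hvmin : ∀ y w : EuclideanSpace ℝ (Fin n),
      psi m n Gl Gu y (vv y) + (1/2) * ‖vv y‖^2 ≤ psi m n Gl Gu y w + (1/2) * ‖w‖^2)
    (ρ σ : ℝ) (hρ : 0 < ρ)
    (x d : ℕ → EuclideanSpace ℝ (Fin n)) (t : ℕ → ℝ) (β : ℕ → ℝ)
    (hx : ∀ k : ℕ, x (k+1) = x k + t k • d k)
    (ht : ∀ k : ℕ, 0 < t k)
    (hd0 : d 0 = vv (x 0))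
    (hdk : ∀ k : ℕ, d (k+1) = vv (x (k+1)) + β (k+1) • d k)
    (hvne : ∀ k : ℕ, vv (x k) ≠ 0)
    (η : ℝ) (hη0 : 0 ≤ η) (hη1 : η < 1 - σ)
    (hA1 : AssumptionA1 m n Gl Gu (x 0))
    (hA2 : AssumptionA2 m n Gl Gu (x 0))
    (hβ : ∀ k : ℕ, β (k+1) =
      η * (psi m n Gl Gu (x (k+1)) (vv (x (k+1))) / psi m n Gl Gu (x k) (d k)))
    (hw : ∀ k : ℕ, StrongWolfe m n Gl Gu ρ σ (x k) (d k) (t k)) :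
    Filter.liminf (fun k : ℕ => ‖vv (x k)‖) Filter.atTop = 0 := by
  have hV : ∀ k, 0 < ‖vv (x k)‖ := fun k => norm_pos_iff.2 (hvne k)
  have hθ : ∀ k, psi m n Gl Gu (x k) (vv (x k)) ≤ -(1/2) * ‖vv (x k)‖^2 :=
    fun k => psi_le_neg_half_sq_norm (hvmin (x k))
  have hθneg : ∀ k, psi m n Gl Gu (x k) (vv (x k)) < 0 := fun k => by nlinarith [hθ k, hV k]
  have := nonempty_of_psi_ne_zero (hθneg 0).ne
  have hσ : 0 ≤ σ := (hw 0).sigma_nonneg (hd0 ▸ (hθneg 0).ne)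
  have hησ : η < 1 - η * σ := by
    nlinarith [mul_pos (sub_pos.2 hη1) (by linarith : (0 : ℝ) < 1 + σ), sq_nonneg σ]
  have hcurv : ∀ k, |psi m n Gl Gu (x (k+1)) (d k)| ≤ σ * |psi m n Gl Gu (x k) (d k)| :=
    fun k => hx k ▸ (hw k).2
  have hdesc := cd_sufficient_descent hσ hη0 (by linarith) hθneg hd0 hdk hβ hcurv
  have hd : ∀ k, psi m n Gl Gu (x k) (d k) < 0 := fun k =>
    (hdesc k).trans_lt (mul_neg_of_pos_of_neg (by linarith) (hθneg k))
  have hdnorm := norm_cd_direction_succ_le (v := fun k => vv (x k)) hη0 hθneg hd hdk hβ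
  have hsum := summable_sq_psi_div_sq_norm hρ (by linarith) ht hx hw hd hA1 hA2
  refine liminf_eq_zero_of_frequently_lt (fun k => norm_nonneg _) fun ε hε =>
    frequently_lt_of_tendsto_sq_div_sq_zero (θ := fun k => -psi m n Gl Gu (x k) (vv (x k)))
      (p := fun k => -psi m n Gl Gu (x k) (d k)) (D := fun k => ‖d k‖) (c := 1 - η * σ)
      (by linarith) hη0 hησ hV (fun k => by linarith [hθ k]) (fun k => by linarith [hdesc k])
      (fun k => norm_pos_iff.2 fun h => (hd k).ne (by rw [h, psi_zero]))
      hdnorm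
      (by simpa only [neg_sq] using hsum.tendsto_atTop_zero) hε

theorem cd_convergence (m n : ℕ) (hm : 0 < m) (hn : 0 < n)
    (Gl Gu : Fin m → EuclideanSpace ℝ (Fin n) → ℝ)
    (hGl : ∀ i, ContDiff ℝ 1 (Gl i)) (hGu : ∀ i, ContDiff ℝ 1 (Gu i))
    (hle : ∀ (i : Fin m) (x : EuclideanSpace ℝ (Fin n)), Gl i x ≤ Gu i x)
    (vv : EuclideanSpace ℝ (Fin n) → EuclideanSpace ℝ (Fin n))
    (hvmin : ∀ y w : EuclideanSpace ℝ (Fin n),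
      psi m n Gl Gu y (vv y) + (1/2) * ‖vv y‖^2 ≤ psi m n Gl Gu y w + (1/2) * ‖w‖^2)
    (ρ σ : ℝ) (hρ : 0 < ρ) (hρσ : ρ < σ) (hσ : σ < 1)
    (x d : ℕ → EuclideanSpace ℝ (Fin n)) (t : ℕ → ℝ) (β : ℕ → ℝ)
    (hx : ∀ k : ℕ, x (k+1) = x k + t k • d k)
    (ht : ∀ k : ℕ, 0 < t k)
    (hd0 : d 0 = vv (x 0))
    (hdk : ∀ k : ℕ, d (k+1) = vv (x (k+1)) + β (k+1) • d k)
    (hvne : ∀ k : ℕ, vv (x k) ≠ 0)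
    (η : ℝ) (hη0 : 0 ≤ η) (hη1 : η < 1 - σ)
    (hA1 : AssumptionA1 m n Gl Gu (x 0))
    (hA2 : AssumptionA2 m n Gl Gu (x 0))
    (hβ : ∀ k : ℕ, β (k+1) =
      η * (psi m n Gl Gu (x (k+1)) (vv (x (k+1))) / psi m n Gl Gu (x k) (d k)))
    (hw : ∀ k : ℕ, StrongWolfe m n Gl Gu ρ σ (x k) (d k) (t k)) :
    Filter.liminf (fun k : ℕ => ‖vv (x k)‖) Filter.atTop = 0 :=
  cd_convergence_general m n Gl Gu vv hvmin ρ σ hρ x d t β hx ht hd0 hdk hvne η hη0 hη1 hA1 hA2 hβ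
    hw
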